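/- Let A = ℂ[μ, τ][z, z⁻¹]. The set of f ∈ A such that f(μ, τ, (μ+τ)(μ−τ)⁻¹ · z) again lies in A (is regular) equals the ℂ-subalgebra generated by μ, τ, x = (μ−τ)z and y = (μ+τ)z⁻¹. This subalgebra is isomorphic to ℂ[μ,τ,x,y]/(xy − (μ²−τ²)), the coordinate ring of the quadric cone xy = μ² − τ². -/

import Mathlib

/-!
STATEMENT 1.  `A = ℂ[μ,τ][z,z⁻¹]` is modelled as `LaurentPolynomial (MvPolynomial (Fin 2) ℂ)`
with `μ = X 0`, `τ = X 1`.  The substitution `z ↦ (μ+τ)(μ−τ)⁻¹ z` lands in Laurent polynomials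
over the fraction field `K` of `ℂ[μ,τ]`; "regular" means lying in the image of the canonical
embedding of `A`.
-/

open LaurentPolynomial MvPolynomial

noncomputable section

abbrev Cmt : Type := MvPolynomial (Fin 2) ℂ

abbrev Kf : Type := FractionRing Cmt

/-- `A = ℂ[μ,τ][z,z⁻¹]`. -/
abbrev Aring : Type := LaurentPolynomial Cmt

/-- `ℂ(μ,τ)-coefficient Laurent polynomials, where the substitution takes values. -/
abbrev SK : Type := LaurentPolynomial Kf

lemma sum_ne : (X 0 + X 1 : Cmt) ≠ 0 := by
  intro h
  have := congrArg (MvPolynomial.eval fun _ : Fin 2 => (1 : ℂ)) h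
  simp at this

lemma diff_ne : (X 0 - X 1 : Cmt) ≠ 0 := by
  intro h
  have := congrArg (MvPolynomial.eval fun i : Fin 2 => if i = 0 then (1 : ℂ) else 0) h
  simp at this

/-- the unit `(μ+τ)/(μ−τ)` of `K` -/
def ratU : Kfˣ :=
  (isUnit_iff_ne_zero.mpr (show algebraMap Cmt Kf (X 0 + X 1) ≠ 0 from
      fun h => sum_ne (IsFractionRing.injective Cmt Kf
        (h.trans (map_zero (algebraMap Cmt Kf)).symm)))).unit *
  (isUnit_iff_ne_zero.mpr (show algebraMap Cmt Kf (X 0 - X 1) ≠ 0 from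
      fun h => diff_ne (IsFractionRing.injective Cmt Kf
        (h.trans (map_zero (algebraMap Cmt Kf)).symm)))).unit⁻¹

/-- the unit `z` of `SK` -/
def zK : SKˣ := (isUnit_T (R := Kf) 1).unit

/-- the canonical embedding `ι : ℂ[μ,τ][z,z⁻¹] → K[z,z⁻¹]`, `z ↦ z`. -/
def iota : Aring →ₐ[Cmt] SK :=
  AddMonoidAlgebra.lift Cmt SK ℤ ((Units.coeHom SK).comp (zpowersHom SKˣ zK))

/-- the substitution `f(μ,τ,z) ↦ f(μ,τ,(μ+τ)(μ−τ)⁻¹·z)`. -/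
def subst : Aring →ₐ[Cmt] SK :=
  AddMonoidAlgebra.lift Cmt SK ℤ
    ((Units.coeHom SK).comp (zpowersHom SKˣ
      ((Units.map (LaurentPolynomial.C (R := Kf)).toMonoidHom ratU) * zK)))

/-- `μ`, `τ`, `x = (μ−τ)z`, `y = (μ+τ)z⁻¹` inside `A`. -/
def muA : Aring := LaurentPolynomial.C (X 0)
def tauA : Aring := LaurentPolynomial.C (X 1)
def xA : Aring := LaurentPolynomial.C (X 0 - X 1) * T 1
def yA : Aring := LaurentPolynomial.C (X 0 + X 1) * T (-1)

/-- the quadric cone `ℂ[μ,τ,x,y]/(xy − (μ²−τ²))`; variables `0,1,2,3 ↦ μ,τ,x,y`. -/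
abbrev Quadric : Type :=
  MvPolynomial (Fin 4) ℂ ⧸
    Ideal.span ({X 2 * X 3 - (X 0 ^ 2 - X 1 ^ 2)} : Set (MvPolynomial (Fin 4) ℂ))

/-!
Comparing coefficients of `z ^ n`, the substitution multiplies the `n`-th coefficient of `f` by
`((μ + τ) / (μ - τ)) ^ n`; since `μ - τ` and `μ + τ` are non-associate primes, the result is
regular iff `(μ - τ) ^ n ∣ fₙ` for `n ≥ 0` and `(μ + τ) ^ (-n) ∣ fₙ` for `n < 0`. These are exactly
the `ℂ[μ, τ]`-combinations of `x ^ n = (μ - τ) ^ n z ^ n` and `y ^ n = (μ + τ) ^ n z ^ (-n)`.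
Modulo `xy - (μ² - τ²)` every polynomial in `μ, τ, x, y` reduces to such a combination
`∑ aₙ(μ, τ) wₙ` with `wₙ = x ^ n` or `y ^ (-n)`, and its image `∑ aₙ cₙ z ^ n` has all `cₙ ≠ 0`,
so the relation generates the whole kernel.
-/

namespace QuadricCone

section Substitution

variable {R : Type*} [Semiring R]

lemma val_isUnit_T_one_unit_zpow (n : ℤ) :
    (((isUnit_T (R := R) 1).unit ^ n : R[T;T⁻¹]ˣ) : R[T;T⁻¹]) = T n := by
  have hinv : (((isUnit_T (R := R) 1).unit⁻¹ : R[T;T⁻¹]ˣ) : R[T;T⁻¹]) = T (-1) :=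
    Units.inv_eq_of_mul_eq_one_right (by rw [IsUnit.unit_spec, ← T_add, add_neg_cancel, T_zero])
  induction n using Int.induction_on with
  | zero => simp
  | succ k ih => rw [zpow_add_one, Units.val_mul, ih, IsUnit.unit_spec, ← T_add]
  | pred k ih => rw [zpow_sub_one, Units.val_mul, ih, hinv, ← T_add, sub_eq_add_neg]

lemma coeff_eq_of_map_single {S : Type*} [Semiring S] (F : R[T;T⁻¹] →+ S[T;T⁻¹])
    (φ : ℤ → R →+ S) (hF : ∀ n a, F (.single n a) = .single n (φ n a))
    (f : R[T;T⁻¹]) (m : ℤ) : (F f).coeff m = φ m (f.coeff m) := by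
  induction f using AddMonoidAlgebra.induction_linear with
  | zero => simp
  | add f g hf hg => simp only [map_add, AddMonoidAlgebra.coeff_add, Finsupp.add_apply, hf, hg]
  | single n a =>
    simp only [hF, AddMonoidAlgebra.coeff_single, Finsupp.single_apply]
    split_ifs with h
    · rw [h]
    · simp

end Substitution

lemma val_ratU : (ratU : Kf) = algebraMap Cmt Kf (X 0 + X 1) / algebraMap Cmt Kf (X 0 - X 1) := by
  rw [ratU, Units.val_mul, Units.val_inv_eq_inv_val, IsUnit.unit_spec, IsUnit.unit_spec,
    div_eq_mul_inv]

lemma iota_single (n : ℤ) (a : Cmt) : iota (.single n a) = .single n (algebraMap Cmt Kf a) := by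
  have h : iota (.single n a) = a • ((zK ^ n : SKˣ) : SK) := by
    rw [iota, AddMonoidAlgebra.lift_single]; rfl
  rw [h, zK, val_isUnit_T_one_unit_zpow, Algebra.smul_def, LaurentPolynomial.algebraMap_apply,
    single_eq_C_mul_T]

lemma subst_single (n : ℤ) (a : Cmt) :
    subst (.single n a) = .single n (algebraMap Cmt Kf a * (ratU : Kf) ^ n) := by
  have h : subst (.single n a) =
      a • (((Units.map (LaurentPolynomial.C (R := Kf)).toMonoidHom ratU * zK) ^ n : SKˣ) : SK) := by
    rw [subst, AddMonoidAlgebra.lift_single]; rfl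
  rw [h, mul_zpow (α := SKˣ), Units.val_mul, ← map_zpow, Units.coe_map, zK,
    val_isUnit_T_one_unit_zpow, Algebra.smul_def, LaurentPolynomial.algebraMap_apply,
    single_eq_C_mul_T, ← mul_assoc, RingHom.toMonoidHom_eq_coe, MonoidHom.coe_coe, ← map_mul,
    Units.val_zpow_eq_zpow_val]

lemma coeff_iota (f : Aring) (m : ℤ) : (iota f).coeff m = algebraMap Cmt Kf (f.coeff m) :=
  coeff_eq_of_map_single iota.toAddMonoidHom (fun _ ↦ (algebraMap Cmt Kf).toAddMonoidHom)
    iota_single f m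

lemma coeff_subst (f : Aring) (m : ℤ) :
    (subst f).coeff m = algebraMap Cmt Kf (f.coeff m) * (ratU : Kf) ^ m :=
  coeff_eq_of_map_single subst.toAddMonoidHom
    (fun n ↦ (AddMonoidHom.mulRight ((ratU : Kf) ^ n)).comp (algebraMap Cmt Kf).toAddMonoidHom)
    subst_single f m

section SignedPow

variable {M N F : Type*} [Monoid M] [Monoid N] [FunLike F M N] [MonoidHomClass F M N]

def signedPow (a b : M) (n : ℤ) : M := (if 0 ≤ n then a else b) ^ n.natAbs

variable (a b : M)

@[simp] lemma signedPow_natCast (k : ℕ) : signedPow a b k = a ^ k := by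
  simp [signedPow]

@[simp] lemma signedPow_neg_natCast (k : ℕ) : signedPow a b (-k) = b ^ k := by
  rcases k.eq_zero_or_pos with rfl | hk
  · simp [signedPow]
  · rw [signedPow, if_neg (by omega), Int.natAbs_neg, Int.natAbs_natCast]

lemma map_signedPow (f : F) (n : ℤ) : f (signedPow a b n) = signedPow (f a) (f b) n := by
  rw [signedPow, signedPow, map_pow, apply_ite f]

lemma signedPow_C_mul_T {R : Type*} [CommSemiring R] (a b : R) (n : ℤ) :
    signedPow (LaurentPolynomial.C a * T 1) (LaurentPolynomial.C b * T (-1)) n =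
      LaurentPolynomial.C (signedPow a b n) * T n := by
  rcases Int.eq_nat_or_neg n with ⟨k, rfl | rfl⟩
  · simp [mul_pow, T_pow]
  · simp [mul_pow, T_pow]

end SignedPow

lemma prime_of_finSuccEquiv_eq_X_sub_C {R : Type*} [CommRing R] [IsDomain R] {n : ℕ}
    {p : MvPolynomial (Fin (n + 1)) R} {q : MvPolynomial (Fin n) R}
    (h : finSuccEquiv R n p = Polynomial.X - Polynomial.C q) : Prime p := by
  rw [← MulEquiv.prime_iff (finSuccEquiv R n).toMulEquiv]
  exact h ▸ Polynomial.prime_X_sub_C q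

lemma prime_mu_sub_tau : Prime (X 0 - X 1 : Cmt) :=
  prime_of_finSuccEquiv_eq_X_sub_C (q := X 0) (by simp [finSuccEquiv_apply]; rfl)

lemma prime_mu_add_tau : Prime (X 0 + X 1 : Cmt) :=
  prime_of_finSuccEquiv_eq_X_sub_C (q := -X 0) (by simp [finSuccEquiv_apply]; rfl)

lemma not_dvd_of_eval_eq_zero {R σ : Type*} [CommSemiring R] {p q : MvPolynomial σ R} (x : σ → R)
    (hp : eval x p = 0) (hq : eval x q ≠ 0) : ¬p ∣ q :=
  fun h ↦ hq (zero_dvd_iff.mp (hp ▸ map_dvd (eval x) h))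

lemma mu_sub_tau_not_dvd : ¬(X 0 - X 1 : Cmt) ∣ X 0 + X 1 :=
  not_dvd_of_eval_eq_zero (fun _ ↦ 1) (by simp) (by norm_num)

lemma mu_add_tau_not_dvd : ¬(X 0 + X 1 : Cmt) ∣ X 0 - X 1 :=
  not_dvd_of_eval_eq_zero ![1, -1] (by simp) (by norm_num)

def xyPowCoeff : ℤ → Cmt := signedPow (X 0 - X 1) (X 0 + X 1)

lemma xyPowCoeff_ne_zero (n : ℤ) : xyPowCoeff n ≠ 0 := by
  rcases Int.eq_nat_or_neg n with ⟨k, rfl | rfl⟩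
  · rw [xyPowCoeff, signedPow_natCast]; exact pow_ne_zero k prime_mu_sub_tau.ne_zero
  · rw [xyPowCoeff, signedPow_neg_natCast]; exact pow_ne_zero k prime_mu_add_tau.ne_zero

lemma xyPowCoeff_dvd_of_dvd_mul {n : ℤ} {a : Cmt} (h : xyPowCoeff n ∣ a * xyPowCoeff (-n)) :
    xyPowCoeff n ∣ a := by
  rcases Int.eq_nat_or_neg n with ⟨k, rfl | rfl⟩
  · simp only [xyPowCoeff, signedPow_natCast, signedPow_neg_natCast] at *
    exact prime_mu_sub_tau.pow_dvd_of_dvd_mul_right k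
      (fun hd ↦ mu_sub_tau_not_dvd (prime_mu_sub_tau.dvd_of_dvd_pow hd)) h
  · simp only [xyPowCoeff, neg_neg, signedPow_natCast, signedPow_neg_natCast] at *
    exact prime_mu_add_tau.pow_dvd_of_dvd_mul_right k
      (fun hd ↦ mu_add_tau_not_dvd (prime_mu_add_tau.dvd_of_dvd_pow hd)) h

lemma algebraMap_xyPowCoeff_mul_ratU_zpow (n : ℤ) :
    algebraMap Cmt Kf (xyPowCoeff n) * (ratU : Kf) ^ n = algebraMap Cmt Kf (xyPowCoeff (-n)) := by
  have hD : algebraMap Cmt Kf (X 0 - X 1) ≠ 0 :=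
    (map_ne_zero_iff _ (IsFractionRing.injective Cmt Kf)).mpr prime_mu_sub_tau.ne_zero
  have hS : algebraMap Cmt Kf (X 0 + X 1) ≠ 0 :=
    (map_ne_zero_iff _ (IsFractionRing.injective Cmt Kf)).mpr prime_mu_add_tau.ne_zero
  rcases Int.eq_nat_or_neg n with ⟨k, rfl | rfl⟩ <;> rw [xyPowCoeff]
  · rw [signedPow_natCast, signedPow_neg_natCast, zpow_natCast, map_pow, map_pow, ← mul_pow,
      val_ratU, mul_div_cancel₀ _ hD]
  · rw [neg_neg, signedPow_natCast, signedPow_neg_natCast, zpow_neg, zpow_natCast, map_pow,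
      map_pow, ← inv_pow, ← mul_pow, val_ratU, inv_div, mul_div_cancel₀ _ hS]

lemma xyPowCoeff_dvd_coeff_of_subst_mem_range {f : Aring} (hf : subst f ∈ iota.range) (n : ℤ) :
    xyPowCoeff n ∣ f.coeff n := by
  obtain ⟨g, hg⟩ := hf
  have hcoeff : (iota g).coeff n = (subst f).coeff n := congrArg (·.coeff n) hg
  rw [coeff_iota, coeff_subst] at hcoeff
  refine xyPowCoeff_dvd_of_dvd_mul ⟨g.coeff n, IsFractionRing.injective Cmt Kf ?_⟩
  rw [map_mul, map_mul, ← algebraMap_xyPowCoeff_mul_ratU_zpow, hcoeff]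
  ring

lemma subst_single_xyPowCoeff (n : ℤ) :
    subst (.single n (xyPowCoeff n)) = iota (.single n (xyPowCoeff (-n))) := by
  rw [subst_single, iota_single, algebraMap_xyPowCoeff_mul_ratU_zpow]

def evalGens : MvPolynomial (Fin 4) ℂ →ₐ[ℂ] Aring := aeval ![muA, tauA, xA, yA]

lemma range_evalGens : evalGens.range = Algebra.adjoin ℂ {muA, tauA, xA, yA} := by
  rw [evalGens, ← Algebra.adjoin_range_eq_range_aeval]
  simp only [Matrix.range_cons, Matrix.range_empty, Set.union_empty, Set.singleton_union]

def incl : Cmt →ₐ[ℂ] MvPolynomial (Fin 4) ℂ := rename (Fin.castLE (by norm_num))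

lemma incl_X (i : Fin 2) : incl (X i) = X (Fin.castLE (by norm_num) i) := rename_X _ _

lemma evalGens_incl (p : Cmt) : evalGens (incl p) = LaurentPolynomial.C p := by
  suffices evalGens.comp incl = IsScalarTower.toAlgHom ℂ Cmt Aring from congr($this p)
  refine MvPolynomial.algHom_ext fun i ↦ ?_
  fin_cases i <;> simp [evalGens, incl, muA, tauA]

def xyPow : ℤ → MvPolynomial (Fin 4) ℂ := signedPow (X 2) (X 3)

lemma evalGens_xyPow (n : ℤ) :
    evalGens (xyPow n) = LaurentPolynomial.C (xyPowCoeff n) * T n := by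
  rw [xyPow, map_signedPow, xyPowCoeff, ← signedPow_C_mul_T]
  simp [evalGens, xA, yA]

lemma evalGens_incl_mul_xyPow (a : Cmt) (n : ℤ) :
    evalGens (incl a * xyPow n) = .single n (a * xyPowCoeff n) := by
  rw [map_mul, evalGens_incl, evalGens_xyPow, ← mul_assoc, ← map_mul, single_eq_C_mul_T]

lemma mem_range_evalGens_of_forall_dvd {f : Aring} (hf : ∀ n, xyPowCoeff n ∣ f.coeff n) :
    f ∈ evalGens.range := by
  rw [← AddMonoidAlgebra.sum_coeff_single f]
  refine Subalgebra.sum_mem _ fun n _ ↦ ?_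
  obtain ⟨b, hb⟩ := hf n
  exact ⟨incl b * xyPow n, by change evalGens _ = _; rw [evalGens_incl_mul_xyPow, hb, mul_comm]⟩

lemma adjoin_le_regular :
    Algebra.adjoin ℂ {muA, tauA, xA, yA} ≤ (iota.range.comap subst).restrictScalars ℂ := by
  have hC (p : Cmt) : subst (LaurentPolynomial.C p) ∈ iota.range :=
    ⟨LaurentPolynomial.C p, (iota.commutes p).trans (subst.commutes p).symm⟩
  have hsingle (n : ℤ) : subst (.single n (xyPowCoeff n)) ∈ iota.range :=
    ⟨_, (subst_single_xyPowCoeff n).symm⟩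
  refine Algebra.adjoin_le ?_
  rintro _ (rfl | rfl | rfl | rfl)
  · exact hC _
  · exact hC _
  · have hx : xA = .single 1 (xyPowCoeff 1) := by
      rw [xA, single_eq_C_mul_T, xyPowCoeff, signedPow]; norm_num
    exact hx ▸ hsingle 1
  · have hy : yA = .single (-1) (xyPowCoeff (-1)) := by
      rw [yA, single_eq_C_mul_T, xyPowCoeff, signedPow]; norm_num
    exact hy ▸ hsingle (-1)

theorem subst_mem_range_iota_iff (f : Aring) :
    subst f ∈ iota.range ↔ f ∈ Algebra.adjoin ℂ {muA, tauA, xA, yA} := by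
  refine ⟨fun hf ↦ ?_, fun hf ↦ adjoin_le_regular hf⟩
  rw [← range_evalGens]
  exact mem_range_evalGens_of_forall_dvd (xyPowCoeff_dvd_coeff_of_subst_mem_range hf)

def quadricRel : MvPolynomial (Fin 4) ℂ := X 2 * X 3 - (X 0 ^ 2 - X 1 ^ 2)

abbrev quadricIdeal : Ideal (MvPolynomial (Fin 4) ℂ) := Ideal.span {quadricRel}

lemma evalGens_quadricRel : evalGens quadricRel = 0 := by
  have hxy : xA * yA = muA ^ 2 - tauA ^ 2 := by
    rw [xA, yA, mul_mul_mul_comm, ← map_mul, ← T_add, add_neg_cancel, T_zero, mul_one, muA, tauA,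
      ← map_pow, ← map_pow, ← map_sub]
    ring_nf
  simp [evalGens, quadricRel, hxy]

lemma mk_X_two_mul_X_three :
    Ideal.Quotient.mk quadricIdeal (X 2 * X 3) =
      Ideal.Quotient.mk quadricIdeal (incl (X 0 ^ 2 - X 1 ^ 2)) := by
  refine Ideal.Quotient.eq.mpr (Ideal.subset_span ?_)
  simp [quadricRel, incl_X]

lemma exists_mk_xyPow_mul_X_two (n : ℤ) :
    ∃ b, Ideal.Quotient.mk quadricIdeal (xyPow n * X 2) =
      Ideal.Quotient.mk quadricIdeal (incl b * xyPow (n + 1)) := by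
  rcases le_or_gt 0 n with hn | hn
  · lift n to ℕ using hn
    refine ⟨1, ?_⟩
    rw [map_one, one_mul, xyPow, ← Nat.cast_succ, signedPow_natCast, signedPow_natCast, pow_succ]
  · obtain ⟨k, rfl⟩ : ∃ k : ℕ, n = -(k + 1 : ℕ) := ⟨(-n - 1).toNat, by omega⟩
    refine ⟨X 0 ^ 2 - X 1 ^ 2, ?_⟩
    rw [show -((k + 1 : ℕ) : ℤ) + 1 = -k by push_cast; ring, xyPow, signedPow_neg_natCast,
      signedPow_neg_natCast, pow_succ, mul_assoc, mul_comm (X 3) (X 2), map_mul,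
      mk_X_two_mul_X_three, ← map_mul, mul_comm]

lemma exists_mk_xyPow_mul_X_three (n : ℤ) :
    ∃ b, Ideal.Quotient.mk quadricIdeal (xyPow n * X 3) =
      Ideal.Quotient.mk quadricIdeal (incl b * xyPow (n - 1)) := by
  rcases le_or_gt n 0 with hn | hn
  · obtain ⟨k, rfl⟩ : ∃ k : ℕ, n = -k := ⟨n.natAbs, by omega⟩
    refine ⟨1, ?_⟩
    rw [map_one, one_mul, xyPow, show -(k : ℤ) - 1 = -(k + 1 : ℕ) by push_cast; ring,
      signedPow_neg_natCast, signedPow_neg_natCast, pow_succ]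
  · obtain ⟨k, rfl⟩ : ∃ k : ℕ, n = (k + 1 : ℕ) := ⟨(n - 1).toNat, by omega⟩
    refine ⟨X 0 ^ 2 - X 1 ^ 2, ?_⟩
    rw [show ((k + 1 : ℕ) : ℤ) - 1 = k by push_cast; ring, xyPow, signedPow_natCast,
      signedPow_natCast, pow_succ, mul_assoc, map_mul, mk_X_two_mul_X_three, ← map_mul, mul_comm]

lemma exists_mk_xyPow_mul_X (n : ℤ) (i : Fin 4) :
    ∃ b m, Ideal.Quotient.mk quadricIdeal (xyPow n * X i) =
      Ideal.Quotient.mk quadricIdeal (incl b * xyPow m) := by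
  fin_cases i
  · exact ⟨X 0, n, by rw [incl_X, mul_comm]; rfl⟩
  · exact ⟨X 1, n, by rw [incl_X, mul_comm]; rfl⟩
  · obtain ⟨b, hb⟩ := exists_mk_xyPow_mul_X_two n
    exact ⟨b, n + 1, hb⟩
  · obtain ⟨b, hb⟩ := exists_mk_xyPow_mul_X_three n
    exact ⟨b, n - 1, hb⟩

def normalForm : (ℤ →₀ Cmt) →+ MvPolynomial (Fin 4) ℂ :=
  Finsupp.liftAddHom fun n ↦ (AddMonoidHom.mulRight (xyPow n)).comp incl.toAddMonoidHom

lemma normalForm_single (n : ℤ) (a : Cmt) : normalForm (.single n a) = incl a * xyPow n :=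
  Finsupp.liftAddHom_apply_single _ n a

lemma coeff_evalGens_normalForm (g : ℤ →₀ Cmt) (m : ℤ) :
    (evalGens (normalForm g)).coeff m = g m * xyPowCoeff m := by
  induction g using Finsupp.induction_linear with
  | zero => simp
  | add g h hg hh =>
    simp only [map_add, AddMonoidAlgebra.coeff_add, Finsupp.add_apply, hg, hh, add_mul]
  | single n a =>
    rw [normalForm_single, evalGens_incl_mul_xyPow, AddMonoidAlgebra.coeff_single,
      Finsupp.single_apply, Finsupp.single_apply]
    split_ifs with h
    · rw [h]
    · rw [zero_mul]

lemma eq_zero_of_evalGens_normalForm_eq_zero {g : ℤ →₀ Cmt} (h : evalGens (normalForm g) = 0) :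
    g = 0 := by
  refine Finsupp.ext fun m ↦ ?_
  have hm := coeff_evalGens_normalForm g m
  rw [h, AddMonoidAlgebra.coeff_zero, Finsupp.zero_apply, eq_comm, mul_eq_zero] at hm
  exact hm.resolve_right (xyPowCoeff_ne_zero m)

lemma exists_mk_eq_mk_normalForm (p : MvPolynomial (Fin 4) ℂ) :
    ∃ g, Ideal.Quotient.mk quadricIdeal p = Ideal.Quotient.mk quadricIdeal (normalForm g) := by
  let N := AddMonoidHom.mrange ((Ideal.Quotient.mk quadricIdeal).toAddMonoidHom.comp normalForm)
  have hN (g : ℤ →₀ Cmt) : Ideal.Quotient.mk quadricIdeal (normalForm g) ∈ N := ⟨g, rfl⟩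
  have hmul (g : ℤ →₀ Cmt) (i : Fin 4) :
      Ideal.Quotient.mk quadricIdeal (normalForm g * X i) ∈ N := by
    induction g using Finsupp.induction_linear with
    | zero => simp [N.zero_mem]
    | add g h hg hh => simpa only [map_add, add_mul] using N.add_mem hg hh
    | single n a =>
      obtain ⟨b, m, h⟩ := exists_mk_xyPow_mul_X n i
      convert hN (.single m (a * b)) using 1
      rw [normalForm_single, normalForm_single, mul_assoc, map_mul, h, ← map_mul, map_mul incl,
        mul_assoc]
  suffices Ideal.Quotient.mk quadricIdeal p ∈ N by
    obtain ⟨g, hg⟩ := this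
    exact ⟨g, hg.symm⟩
  induction p using MvPolynomial.induction_on with
  | C c => exact ⟨.single 0 (C c), by simp [normalForm_single, xyPow, signedPow, incl]⟩
  | add p q hp hq => simpa only [map_add] using N.add_mem hp hq
  | mul_X p i hp =>
    obtain ⟨g, hg⟩ := hp
    change Ideal.Quotient.mk quadricIdeal (normalForm g) = _ at hg
    rw [map_mul, ← hg, ← map_mul]
    exact hmul g i

lemma ker_evalGens : RingHom.ker evalGens = quadricIdeal := by
  have hle : quadricIdeal ≤ RingHom.ker evalGens :=
    Ideal.span_le.mpr (Set.singleton_subset_iff.mpr evalGens_quadricRel)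
  refine le_antisymm (fun p hp ↦ ?_) hle
  obtain ⟨g, hg⟩ := exists_mk_eq_mk_normalForm p
  have hdiff : evalGens (p - normalForm g) = 0 := hle (Ideal.Quotient.eq.mp hg)
  rw [map_sub, RingHom.mem_ker.mp hp, zero_sub, neg_eq_zero] at hdiff
  rw [← Ideal.Quotient.eq_zero_iff_mem, hg, eq_zero_of_evalGens_normalForm_eq_zero hdiff,
    map_zero, map_zero]

def quadricEquivAdjoin : Quadric ≃ₐ[ℂ] Algebra.adjoin ℂ {muA, tauA, xA, yA} :=
  (Ideal.quotientEquivAlgOfEq ℂ (evalGens.ker_rangeRestrict.trans ker_evalGens).symm).trans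
    ((Ideal.quotientKerAlgEquivOfSurjective evalGens.rangeRestrict_surjective).trans
      (Subalgebra.equivOfEq _ _ range_evalGens))

lemma quadricEquivAdjoin_mk (p : MvPolynomial (Fin 4) ℂ) :
    (quadricEquivAdjoin (Ideal.Quotient.mk _ p) : Aring) = evalGens p :=
  rfl

end QuadricCone

/-- The subset of `f ∈ ℂ[μ,τ][z,z⁻¹]` regular after `z ↦ (μ+τ)(μ−τ)⁻¹z`
is the `ℂ`-subalgebra generated by `μ, τ, x = (μ−τ)z, y = (μ+τ)z⁻¹`, which is isomorphic to
the coordinate ring of the quadric cone `xy = μ² − τ²`. -/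
theorem statement1 :
    (∀ f : Aring, subst f ∈ iota.range ↔
      f ∈ Algebra.adjoin ℂ ({muA, tauA, xA, yA} : Set Aring)) ∧
    ∃ e : Quadric ≃ₐ[ℂ] Algebra.adjoin ℂ ({muA, tauA, xA, yA} : Set Aring),
      e (Ideal.Quotient.mk _ (X 0)) = ⟨muA, Algebra.subset_adjoin (by simp)⟩ ∧
      e (Ideal.Quotient.mk _ (X 1)) = ⟨tauA, Algebra.subset_adjoin (by simp)⟩ ∧
      e (Ideal.Quotient.mk _ (X 2)) = ⟨xA, Algebra.subset_adjoin (by simp)⟩ ∧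
      e (Ideal.Quotient.mk _ (X 3)) = ⟨yA, Algebra.subset_adjoin (by simp)⟩ := by
  refine ⟨QuadricCone.subst_mem_range_iota_iff, QuadricCone.quadricEquivAdjoin, ?_, ?_, ?_, ?_⟩ <;>
    exact Subtype.ext (by simp [QuadricCone.quadricEquivAdjoin_mk, QuadricCone.evalGens])
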